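/- Telescoping product along a derivation tree: let t be an ordered derivation tree with root label A and yield of size n = ℓ + type(A), in an n-unambiguous CNF grammar. The product over all nodes of t of the transition probabilities (production choice probability D_p(ℓ')/D_X(ℓ') times, for binary nodes, the split probability D_B(k)·D_C(ℓ'−i−k)/D_p(ℓ')) equals 1/D_A(ℓ). -/

import Mathlib

/-- Short-hand productions of a CNF hyperedge replacement grammar, as in the
paper: `nt A B C i` stands for `A ⟶ BC, i`, `tm A a i` for `A ⟶ a, i`, and
`eps A i` for `A ⟶ λ, i`, where `i` is the number of internal (non-external)
nodes of the right-hand side.  The tag `id` distinguishes different productions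
with the same short-hand data. -/
inductive GProd (Nt T : Type) where
  | nt (id : ℕ) (A B C : Nt) (i : ℕ)
  | tm (id : ℕ) (A : Nt) (a : T) (i : ℕ)
  | eps (id : ℕ) (A : Nt) (i : ℕ)
deriving DecidableEq

/-- The left-hand side of a short-hand production. -/
def GProd.lhs {Nt T : Type} : GProd Nt T → Nt
  | .nt _ A _ _ _ => A
  | .tm _ A _ _ => A
  | .eps _ A _ => A

/-- Ordered derivation trees of a CNF hyperedge replacement grammar with
production set `P`: each node is labelled by a production applicable to its
root non-terminal, with one subtree per non-terminal hyperedge of its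
right-hand side (in the marked order `α`, `β`). -/
inductive DTree {Nt T : Type} (P : Finset (GProd Nt T)) : Nt → Type where
  | node (id : ℕ) (A B C : Nt) (i : ℕ) (h : GProd.nt id A B C i ∈ P)
      (t₁ : DTree P B) (t₂ : DTree P C) : DTree P A
  | leafT (id : ℕ) (A : Nt) (a : T) (i : ℕ) (h : GProd.tm id A a i ∈ P) : DTree P A
  | leafE (id : ℕ) (A : Nt) (i : ℕ) (h : GProd.eps id A i ∈ P) : DTree P A

namespace DTree

variable {Nt T : Type} {P : Finset (GProd Nt T)} {A : Nt}

/-- The size contribution `ℓ` of the yield of a derivation tree, so that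
`|yield t| = sz t + type A` for a tree `t` with root label `A`: a terminal
production contributes its `i` internal nodes plus one terminal hyperedge, an
empty production its `i` internal nodes, and a non-terminal production its `i`
internal nodes plus the contributions of its two subtrees. -/
def sz : ∀ {A : Nt}, DTree P A → ℕ
  | _, node _ _ _ _ i _ t₁ t₂ => i + t₁.sz + t₂.sz
  | _, leafT _ _ _ i _ => i + 1
  | _, leafE _ _ i _ => i

/-- The production applied at the root of a derivation tree. -/
def rootP : ∀ {A : Nt}, DTree P A → GProd Nt T
  | _, node id A B C i _ _ _ => GProd.nt id A B C i
  | _, leafT id A a i _ => GProd.tm id A a i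
  | _, leafE id A i _ => GProd.eps id A i

/-- The number of nodes of a derivation tree, i.e. the number of productions
applied in the corresponding derivation. -/
def nodes : ∀ {A : Nt}, DTree P A → ℕ
  | _, node _ _ _ _ _ _ t₁ t₂ => 1 + t₁.nodes + t₂.nodes
  | _, leafT _ _ _ _ _ => 1
  | _, leafE _ _ _ _ => 1

end DTree

/-- `D P A ℓ`: the number of ordered derivation trees with root label `A`
whose yield has size `ℓ + type A`. -/
noncomputable def D {Nt T : Type} (P : Finset (GProd Nt T)) (A : Nt) (ℓ : ℕ) : ℕ :=
  Nat.card {t : DTree P A // t.sz = ℓ}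

/-- `Dp P A p ℓ`: the number of such trees whose root production is `p`. -/
noncomputable def Dp {Nt T : Type} (P : Finset (GProd Nt T)) (A : Nt)
    (p : GProd Nt T) (ℓ : ℕ) : ℕ :=
  Nat.card {t : DTree P A // t.rootP = p ∧ t.sz = ℓ}

/-- The product, over all nodes of an ordered derivation tree, of the sampler's
transition probabilities: at each node the production-choice probability
`D_p(ℓ')/D_X(ℓ')` and, for binary nodes, additionally the split probability
`D_B(k)·D_C(ℓ'−i−k)/D_p(ℓ')`. -/
noncomputable def treeProb {Nt T : Type} (P : Finset (GProd Nt T)) :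
    ∀ {A : Nt}, DTree P A → ℚ
  | _, DTree.node id A B C i _h t₁ t₂ =>
      ((Dp P A (GProd.nt id A B C i) (i + t₁.sz + t₂.sz) : ℚ) /
          (D P A (i + t₁.sz + t₂.sz) : ℚ)) *
        (((D P B t₁.sz * D P C t₂.sz : ℕ) : ℚ) /
          (Dp P A (GProd.nt id A B C i) (i + t₁.sz + t₂.sz) : ℚ)) *
        treeProb P t₁ * treeProb P t₂
  | _, DTree.leafT id A a i _h =>
      (Dp P A (GProd.tm id A a i) (i + 1) : ℚ) / (D P A (i + 1) : ℚ)
  | _, DTree.leafE id A i _h =>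
      (Dp P A (GProd.eps id A i) i : ℚ) / (D P A i : ℚ)

/-! The node factors telescope: the split probability cancels the numerator `D_p(ℓ')` of the
production probability, and by induction the subtrees contribute `1 / D_B(k)` and
`1 / D_C(ℓ' - i - k)`, cancelling its numerator. A leaf production yields exactly one tree, so
a leaf contributes `1 / D_X(ℓ')`. All the counts involved are nonzero because there are only
finitely many trees of each size: every tree has size at least one, so a binary node of size
`n + 1` has subtrees of size at most `n`. -/

namespace DTree

variable {Nt T : Type} {P : Finset (GProd Nt T)}

def children : ∀ {A : Nt}, DTree P A → Option ((Σ B, DTree P B) × (Σ C, DTree P C))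
  | _, node _ _ B C _ _ t₁ t₂ => some (⟨B, t₁⟩, ⟨C, t₂⟩)
  | _, leafT _ _ _ _ _ => none
  | _, leafE _ _ _ _ => none

theorem rootP_mem : ∀ {A : Nt} (t : DTree P A), t.rootP ∈ P
  | _, node _ _ _ _ _ h _ _ => h
  | _, leafT _ _ _ _ h => h
  | _, leafE _ _ _ h => h

theorem injective_rootP_children :
    Function.Injective fun x : Σ A, DTree P A => (x.2.rootP, x.2.children) := by
  rintro ⟨A, t⟩ ⟨A', t'⟩ h
  cases t <;> cases t' <;>
    simp only [rootP, children, Prod.mk.injEq, Option.some.injEq, Sigma.mk.injEq,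
      GProd.nt.injEq, GProd.tm.injEq, GProd.eps.injEq, reduceCtorEq, false_and, and_false] at h
  · obtain ⟨⟨rfl, rfl, rfl, rfl, rfl⟩, ⟨-, h₁⟩, -, h₂⟩ := h
    cases h₁; cases h₂; rfl
  · obtain ⟨⟨rfl, rfl, rfl, rfl⟩, -⟩ := h
    rfl
  · obtain ⟨⟨rfl, rfl, rfl⟩, -⟩ := h
    rfl

theorem one_le_sz (heps : ∀ id A i, GProd.eps id A i ∈ P → 1 ≤ i) :
    ∀ {A : Nt} (t : DTree P A), 1 ≤ t.sz
  | _, node _ _ _ _ _ _ t₁ _ => by have := one_le_sz heps t₁; simp only [sz]; omega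
  | _, leafT _ _ _ _ _ => by simp [sz]
  | _, leafE id A i h => heps id A i h

theorem finite_setOf_sz_le (heps : ∀ id A i, GProd.eps id A i ∈ P → 1 ≤ i) (n : ℕ) :
    {x : Σ A, DTree P A | x.2.sz ≤ n}.Finite := by
  induction n with
  | zero =>
    convert Set.finite_empty
    ext ⟨A, t⟩
    simpa [Nat.one_le_iff_ne_zero] using one_le_sz heps t
  | succ n ih =>
    refine Set.Finite.of_finite_image (f := fun x : Σ A, DTree P A => (x.2.rootP, x.2.children))
      ((P.finite_toSet.prod (((ih.prod ih).image some).insert none)).subset ?_)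
      injective_rootP_children.injOn
    rintro _ ⟨⟨A, t⟩, ht, rfl⟩
    refine ⟨rootP_mem t, ?_⟩
    cases t with
    | node _ _ B C i _ t₁ t₂ =>
      have h₁ := one_le_sz heps t₁
      have h₂ := one_le_sz heps t₂
      simp only [Set.mem_ofPred_eq, sz] at ht
      exact Or.inr ⟨(⟨B, t₁⟩, ⟨C, t₂⟩), ⟨show t₁.sz ≤ n by omega, show t₂.sz ≤ n by omega⟩, rfl⟩
    | leafT => exact Or.inl rfl
    | leafE => exact Or.inl rfl

theorem finite_setOf_sz_eq (heps : ∀ id A i, GProd.eps id A i ∈ P → 1 ≤ i) (A : Nt) (ℓ : ℕ) :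
    {t : DTree P A | t.sz = ℓ}.Finite :=
  ((finite_setOf_sz_le heps ℓ).preimage sigma_mk_injective.injOn).subset fun _ h => h.le

end DTree

section Counts

variable {Nt T : Type} {P : Finset (GProd Nt T)}

theorem D_sz_pos (heps : ∀ id A i, GProd.eps id A i ∈ P → 1 ≤ i) {A : Nt} (t : DTree P A) :
    0 < D P A t.sz :=
  have := (DTree.finite_setOf_sz_eq heps A t.sz).to_subtype
  Nat.card_pos_iff.2 ⟨⟨⟨t, rfl⟩⟩, this⟩

theorem Dp_rootP_sz_pos (heps : ∀ id A i, GProd.eps id A i ∈ P → 1 ≤ i) {A : Nt}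
    (t : DTree P A) : 0 < Dp P A t.rootP t.sz :=
  have := ((DTree.finite_setOf_sz_eq heps A t.sz).subset fun _ h => h.2).to_subtype
  Nat.card_pos_iff.2 ⟨⟨⟨t, rfl, rfl⟩⟩, this⟩

theorem Dp_tm_eq_one {id : ℕ} {A : Nt} {a : T} {i : ℕ} (h : GProd.tm id A a i ∈ P) :
    Dp P A (GProd.tm id A a i) (i + 1) = 1 := by
  refine Nat.card_eq_one_iff_exists.2 ⟨⟨.leafT id A a i h, rfl, rfl⟩, ?_⟩
  rintro ⟨t, ht, -⟩
  cases t <;> simp only [DTree.rootP, GProd.tm.injEq, reduceCtorEq] at ht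
  obtain ⟨rfl, -, rfl, rfl⟩ := ht
  rfl

theorem Dp_eps_eq_one {id : ℕ} {A : Nt} {i : ℕ} (h : GProd.eps id A i ∈ P) :
    Dp P A (GProd.eps id A i) i = 1 := by
  refine Nat.card_eq_one_iff_exists.2 ⟨⟨.leafE id A i h, rfl, rfl⟩, ?_⟩
  rintro ⟨t, ht, -⟩
  cases t <;> simp only [DTree.rootP, GProd.eps.injEq, reduceCtorEq] at ht
  obtain ⟨rfl, -, rfl⟩ := ht
  rfl

end Counts

/-- Telescoping product along a derivation tree: in a CNF
grammar (empty-rhs productions have at least one internal node, as supplied by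
the Chomsky normal form; for a non-ambiguous grammar trees correspond
bijectively to generated hypergraphs), the product over all nodes of an
ordered derivation tree `t` of the sampler's transition probabilities equals
`1 / D_A(ℓ)` where `ℓ = sz t` (so that the yield has size `ℓ + type A`). -/
theorem treeProb_eq_inv {Nt T : Type} (P : Finset (GProd Nt T))
    (heps : ∀ id A i, GProd.eps id A i ∈ P → 1 ≤ i)
    (A : Nt) (t : DTree P A) :
    treeProb P t = 1 / (D P A t.sz : ℚ) := by
  induction t with
  | node id A B C i h t₁ t₂ ih₁ ih₂ =>
    have hDp : (Dp P A (.nt id A B C i) (i + t₁.sz + t₂.sz) : ℚ) ≠ 0 := by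
      exact_mod_cast (Dp_rootP_sz_pos heps (.node id A B C i h t₁ t₂)).ne'
    have hB : (D P B t₁.sz : ℚ) ≠ 0 := by exact_mod_cast (D_sz_pos heps t₁).ne'
    have hC : (D P C t₂.sz : ℚ) ≠ 0 := by exact_mod_cast (D_sz_pos heps t₂).ne'
    rw [treeProb, ih₁, ih₂, DTree.sz]
    push_cast
    field_simp
  | leafT id A a i h => rw [treeProb, Dp_tm_eq_one h, DTree.sz, Nat.cast_one]
  | leafE id A i h => rw [treeProb, Dp_eps_eq_one h, DTree.sz, Nat.cast_one]
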